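/- arXiv:1710.11481 — 5 statements merged into one kernel-verified Lean document; each statement's English description precedes it below -/
import Mathlib

section
/- Let P ⊂ ℝ be a closed bounded interval, μ̄ ∈ P, and let 𝒯 be a finite partition of P into closed subintervals with pairwise intersections of Lebesgue measure zero, where each cell T ∈ 𝒯 is an interval of length 2^{-ℓ(T)} for a natural number ℓ(T) (its level), any two cells sharing a boundary point have levels differing by at most one, L is the maximal level occurring in 𝒯, and μ̄ is contained in a cell of level L. Then every cell I of level ℓ < L satisfies dist(I, μ̄) ≥ 2^{-ℓ}·(1 − 2^{−(L−ℓ)+1}). -/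
open Set Metric

lemma infDist_Icc_right {a b t : ℝ} (hab : a ≤ b) (hbt : b ≤ t) :
    Metric.infDist t (Set.Icc a b) = t - b := by
  apply le_antisymm
  · have := Metric.infDist_le_dist_of_mem (x := t) (Set.right_mem_Icc.2 hab)
    rwa [Real.dist_eq, abs_of_nonneg (by linarith)] at this
  · by_contra h
    push_neg at h
    rw [Metric.infDist_lt_iff ⟨b, Set.right_mem_Icc.2 hab⟩] at h
    obtain ⟨y, hy, hd⟩ := h
    rw [Real.dist_eq] at hd
    have h2 := hy.2
    have : t - b ≤ |t - y| := le_trans (by linarith) (le_abs_self _)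
    linarith

lemma infDist_Icc_left {a b t : ℝ} (hab : a ≤ b) (hta : t ≤ a) :
    Metric.infDist t (Set.Icc a b) = a - t := by
  apply le_antisymm
  · have := Metric.infDist_le_dist_of_mem (x := t) (Set.left_mem_Icc.2 hab)
    rwa [Real.dist_eq, abs_of_nonpos (by linarith), neg_sub] at this
  · by_contra h
    push_neg at h
    rw [Metric.infDist_lt_iff ⟨a, Set.left_mem_Icc.2 hab⟩] at h
    obtain ⟨y, hy, hd⟩ := h
    rw [Real.dist_eq, abs_sub_comm] at hd
    have h2 := hy.1
    have : a - t ≤ |y - t| := le_trans (by linarith) (le_abs_self _)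
    linarith

lemma aux0 (lo hi : ℝ) (μbar : ℝ) (hμbarP : μbar ∈ Set.Icc lo hi)
    (cells : Finset (ℝ × ℕ)) (L : ℕ)
    (hcover : (⋃ c ∈ cells, Set.Icc c.1 (c.1 + (2:ℝ) ^ (-(c.2 : ℤ)))) = Set.Icc lo hi)
    (hdisj : ∀ c ∈ cells, ∀ c' ∈ cells, c ≠ c' →
      MeasureTheory.volume (Set.Icc c.1 (c.1 + (2:ℝ) ^ (-(c.2 : ℤ))) ∩
        Set.Icc c'.1 (c'.1 + (2:ℝ) ^ (-(c'.2 : ℤ)))) = 0)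
    (hgrade : ∀ c ∈ cells, ∀ c' ∈ cells,
      (Set.Icc c.1 (c.1 + (2:ℝ) ^ (-(c.2 : ℤ))) ∩
        Set.Icc c'.1 (c'.1 + (2:ℝ) ^ (-(c'.2 : ℤ)))).Nonempty →
      (c.2 : ℤ) - (c'.2 : ℤ) ≤ 1)
    (hLmax : ∀ c ∈ cells, c.2 ≤ L)
    (hμbarcell : ∃ c ∈ cells, c.2 = L ∧ μbar ∈ Set.Icc c.1 (c.1 + (2:ℝ) ^ (-(c.2 : ℤ))))
    (n : ℕ) :
    ∀ I ∈ cells, I.2 < L →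
      Metric.infDist μbar (Set.Icc I.1 (I.1 + (2:ℝ) ^ (-(I.2 : ℤ)))) ≤ n * (2:ℝ) ^ (-(L:ℤ)) →
      (2:ℝ) ^ (-(I.2:ℤ)) - (2:ℝ) ^ (1-(L:ℤ)) ≤
        Metric.infDist μbar (Set.Icc I.1 (I.1 + (2:ℝ) ^ (-(I.2:ℤ)))) := by
  obtain ⟨J, hJ, hJL, hμJ⟩ := hμbarcell
  have hsub : ∀ c ∈ cells, Set.Icc c.1 (c.1 + (2:ℝ) ^ (-(c.2 : ℤ))) ⊆ Set.Icc lo hi := by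
    intro c hc
    rw [← hcover]
    exact Set.subset_biUnion_of_mem (u := fun c => Set.Icc c.1 (c.1 + (2:ℝ) ^ (-(c.2 : ℤ)))) hc
  induction n with
  | zero =>
    intro I hI hIL hdist
    by_cases hL1 : L ≤ I.2 + 1
    · have : (2:ℝ) ^ (-(I.2:ℤ)) ≤ (2:ℝ) ^ (1-(L:ℤ)) := by
        apply zpow_le_zpow_right₀ one_le_two
        omega
      have := Metric.infDist_nonneg (x := μbar)
        (s := Set.Icc I.1 (I.1 + (2:ℝ) ^ (-(I.2:ℤ))))
      linarith
    · exfalso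
      have hpos : (0:ℝ) < (2:ℝ) ^ (-(I.2:ℤ)) := by positivity
      have hne : (Set.Icc I.1 (I.1 + (2:ℝ) ^ (-(I.2:ℤ)))).Nonempty :=
        ⟨I.1, Set.left_mem_Icc.2 (by linarith)⟩
      have h0 : Metric.infDist μbar (Set.Icc I.1 (I.1 + (2:ℝ) ^ (-(I.2:ℤ)))) = 0 := by
        have := Metric.infDist_nonneg (x := μbar)
          (s := Set.Icc I.1 (I.1 + (2:ℝ) ^ (-(I.2:ℤ))))
        simp only [Nat.cast_zero, zero_mul] at hdist
        linarith
      have hmem : μbar ∈ Set.Icc I.1 (I.1 + (2:ℝ) ^ (-(I.2:ℤ))) :=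
        (isClosed_Icc.mem_iff_infDist_zero hne).2 h0
      have := hgrade J hJ I hI ⟨μbar, hμJ, hmem⟩
      rw [hJL] at this
      omega
  | succ n IH =>
    intro I hI hIL hdist
    by_cases hL1 : L ≤ I.2 + 1
    · have : (2:ℝ) ^ (-(I.2:ℤ)) ≤ (2:ℝ) ^ (1-(L:ℤ)) := by
        apply zpow_le_zpow_right₀ one_le_two
        omega
      have := Metric.infDist_nonneg (x := μbar)
        (s := Set.Icc I.1 (I.1 + (2:ℝ) ^ (-(I.2:ℤ))))
      linarith
    have hL2 : I.2 + 2 ≤ L := by omega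
    have hpos : (0:ℝ) < (2:ℝ) ^ (-(I.2:ℤ)) := by positivity
    have hμI : μbar ∉ Set.Icc I.1 (I.1 + (2:ℝ) ^ (-(I.2:ℤ))) := by
      intro hmem
      have := hgrade J hJ I hI ⟨μbar, hμJ, hmem⟩
      rw [hJL] at this
      omega
    have hJpos : (0:ℝ) < (2:ℝ) ^ (-(J.2:ℤ)) := by positivity
    rcases lt_or_ge μbar (I.1 + (2:ℝ) ^ (-(I.2:ℤ))) with hside | hside
    · -- left case: μbar < I.1
      have hμx : μbar < I.1 := by
        by_contra h
        push_neg at h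
        exact hμI ⟨h, hside.le⟩
      have hxI : I.1 ∈ Set.Icc I.1 (I.1 + (2:ℝ) ^ (-(I.2:ℤ))) :=
        Set.left_mem_Icc.2 (by linarith)
      have hxP := hsub I hI hxI
      have hlo : lo < I.1 := lt_of_le_of_lt hμbarP.1 hμx
      set F : Finset ℝ := insert (I.1 - lo)
        ((cells.filter (fun c => c.1 + (2:ℝ) ^ (-(c.2:ℤ)) < I.1)).image
          (fun c => I.1 - (c.1 + (2:ℝ) ^ (-(c.2:ℤ))))) with hF
      have hFne : F.Nonempty := ⟨I.1 - lo, Finset.mem_insert_self _ _⟩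
      have hFpos : ∀ y ∈ F, 0 < y := by
        intro y hy
        rw [hF, Finset.mem_insert] at hy
        rcases hy with rfl | hy
        · linarith
        · obtain ⟨c, hc, rfl⟩ := Finset.mem_image.1 hy
          have := (Finset.mem_filter.1 hc).2
          linarith
      set ε := F.min' hFne / 2 with hε
      have hεpos : 0 < ε := by
        have := hFpos _ (F.min'_mem hFne)
        rw [hε]; linarith
      have hεlo : lo ≤ I.1 - ε := by
        have h1 : F.min' hFne ≤ I.1 - lo := Finset.min'_le _ _ (Finset.mem_insert_self _ _)
        have := hFpos _ (F.min'_mem hFne)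
        rw [hε]; linarith
      have hεlt : ∀ c ∈ cells, c.1 + (2:ℝ) ^ (-(c.2:ℤ)) < I.1 →
          c.1 + (2:ℝ) ^ (-(c.2:ℤ)) < I.1 - ε := by
        intro c hc hcx
        have h1 : F.min' hFne ≤ I.1 - (c.1 + (2:ℝ) ^ (-(c.2:ℤ))) := by
          apply Finset.min'_le
          rw [hF, Finset.mem_insert]
          right
          exact Finset.mem_image.2 ⟨c, Finset.mem_filter.2 ⟨hc, hcx⟩, rfl⟩
        have := hFpos _ (F.min'_mem hFne)
        rw [hε]; linarith
      have hmem : I.1 - ε ∈ Set.Icc lo hi := ⟨hεlo, by linarith [hxP.2]⟩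
      rw [← hcover] at hmem
      simp only [Set.mem_iUnion, exists_prop] at hmem
      obtain ⟨c', hc', hxc'⟩ := hmem
      have hmpos : (0:ℝ) < (2:ℝ) ^ (-(c'.2:ℤ)) := by positivity
      have hr'ge : I.1 ≤ c'.1 + (2:ℝ) ^ (-(c'.2:ℤ)) := by
        by_contra h
        push_neg at h
        have := hεlt c' hc' h
        have := hxc'.2
        linarith
      have hc'lt : c'.1 < I.1 := by
        have := hxc'.1
        linarith
      have hc'ne : c' ≠ I := by
        intro h
        rw [h] at hc'lt
        exact absurd hc'lt (lt_irrefl _)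
      have hvol := hdisj I hI c' hc' (fun h => hc'ne h.symm)
      rw [Set.Icc_inter_Icc, Real.volume_Icc, ENNReal.ofReal_eq_zero] at hvol
      have hmaxx : max I.1 c'.1 = I.1 := max_eq_left hc'lt.le
      rw [hmaxx] at hvol
      have hr'1 : c'.1 + (2:ℝ) ^ (-(c'.2:ℤ)) = I.1 := by
        rcases min_cases (I.1 + (2:ℝ) ^ (-(I.2:ℤ))) (c'.1 + (2:ℝ) ^ (-(c'.2:ℤ))) with
          ⟨hm, _⟩ | ⟨hm, _⟩
        · rw [hm] at hvol; linarith
        · rw [hm] at hvol; linarith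
      have hxmemc' : I.1 ∈ Set.Icc c'.1 (c'.1 + (2:ℝ) ^ (-(c'.2:ℤ))) := ⟨hc'lt.le, hr'1.ge⟩
      have hm1 : (c'.2:ℤ) ≤ (I.2:ℤ) + 1 := by
        have := hgrade c' hc' I hI ⟨I.1, hxmemc', hxI⟩
        omega
      have hmL : c'.2 < L := by omega
      have hμc'1 : μbar ≤ c'.1 := by
        by_cases hμc' : μbar ∈ Set.Icc c'.1 (c'.1 + (2:ℝ) ^ (-(c'.2:ℤ)))
        · have hJc' : J ≠ c' := by
            intro h
            rw [h] at hJL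
            omega
          have hv2 := hdisj J hJ c' hc' hJc'
          rw [Set.Icc_inter_Icc, Real.volume_Icc, ENNReal.ofReal_eq_zero] at hv2
          have hmax : max J.1 c'.1 ≤ μbar := max_le hμJ.1 hμc'.1
          have hmin : μbar ≤ min (J.1 + (2:ℝ) ^ (-(J.2:ℤ))) (c'.1 + (2:ℝ) ^ (-(c'.2:ℤ))) :=
            le_min hμJ.2 hμc'.2
          have heq1 : max J.1 c'.1 = μbar := by linarith
          have heq2 : min (J.1 + (2:ℝ) ^ (-(J.2:ℤ))) (c'.1 + (2:ℝ) ^ (-(c'.2:ℤ))) = μbar := by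
            linarith
          have hJ1 : J.1 + (2:ℝ) ^ (-(J.2:ℤ)) = μbar := by
            rcases min_cases (J.1 + (2:ℝ) ^ (-(J.2:ℤ))) (c'.1 + (2:ℝ) ^ (-(c'.2:ℤ))) with
              ⟨hm, _⟩ | ⟨hm, _⟩
            · rw [hm] at heq2; exact heq2
            · rw [hm] at heq2; rw [heq2] at hr'1; linarith
          rcases max_cases J.1 c'.1 with ⟨hm, _⟩ | ⟨hm, _⟩
          · rw [hm] at heq1; linarith
          · rw [hm] at heq1; linarith
        · rw [Set.mem_Icc] at hμc'
          push_neg at hμc'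
          by_contra h2
          push_neg at h2
          have := hμc' h2.le
          linarith
      have hdI : Metric.infDist μbar (Set.Icc I.1 (I.1 + (2:ℝ) ^ (-(I.2:ℤ)))) =
          I.1 - μbar := infDist_Icc_left (by linarith) hμx.le
      have hdc' : Metric.infDist μbar (Set.Icc c'.1 (c'.1 + (2:ℝ) ^ (-(c'.2:ℤ)))) =
          c'.1 - μbar := infDist_Icc_left (by linarith) hμc'1
      rw [hdI] at hdist ⊢
      have hLm : (2:ℝ) ^ (-(L:ℤ)) ≤ (2:ℝ) ^ (-(c'.2:ℤ)) := by
        apply zpow_le_zpow_right₀ one_le_two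
        have := hLmax c' hc'
        omega
      have hIH : (2:ℝ) ^ (-(c'.2:ℤ)) - (2:ℝ) ^ (1-(L:ℤ)) ≤
          Metric.infDist μbar (Set.Icc c'.1 (c'.1 + (2:ℝ) ^ (-(c'.2:ℤ)))) := by
        apply IH c' hc' hmL
        rw [hdc']
        push_cast at hdist
        linarith
      rw [hdc'] at hIH
      have hdouble : (2:ℝ) ^ (-(I.2:ℤ)) ≤ 2 * (2:ℝ) ^ (-(c'.2:ℤ)) := by
        have h1 : (2:ℝ) ^ (-(I.2:ℤ)) = 2 * (2:ℝ) ^ (-(I.2:ℤ) - 1) := by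
          rw [mul_comm, ← zpow_add_one₀ (two_ne_zero (α := ℝ))]
          norm_num
        have h2 : (2:ℝ) ^ (-(I.2:ℤ) - 1) ≤ (2:ℝ) ^ (-(c'.2:ℤ)) := by
          apply zpow_le_zpow_right₀ one_le_two
          omega
        linarith
      linarith
    · -- right case: μbar ≥ I.1 + h; in fact >
      set x := I.1 + (2:ℝ) ^ (-(I.2:ℤ)) with hxdef
      have hxμ : x < μbar := lt_of_le_of_ne hside (by
        intro h
        exact hμI ⟨by linarith, h.ge⟩)
      have hxI : x ∈ Set.Icc I.1 x := Set.right_mem_Icc.2 (by linarith)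
      have hxP := hsub I hI hxI
      have hxhi : x < hi := lt_of_lt_of_le hxμ hμbarP.2
      -- choose ε
      set F : Finset ℝ := insert (hi - x)
        ((cells.filter (fun c => x < c.1)).image (fun c => c.1 - x)) with hF
      have hFne : F.Nonempty := ⟨hi - x, Finset.mem_insert_self _ _⟩
      have hFpos : ∀ y ∈ F, 0 < y := by
        intro y hy
        rw [hF, Finset.mem_insert] at hy
        rcases hy with rfl | hy
        · linarith
        · obtain ⟨c, hc, rfl⟩ := Finset.mem_image.1 hy
          have := (Finset.mem_filter.1 hc).2
          linarith
      set ε := F.min' hFne / 2 with hε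
      have hεpos : 0 < ε := by
        have := hFpos _ (F.min'_mem hFne)
        rw [hε]; linarith
      have hεhi : x + ε ≤ hi := by
        have h1 : F.min' hFne ≤ hi - x := Finset.min'_le _ _ (Finset.mem_insert_self _ _)
        rw [hε]
        have := hFpos _ (F.min'_mem hFne)
        linarith
      have hεlt : ∀ c ∈ cells, x < c.1 → x + ε < c.1 := by
        intro c hc hcx
        have h1 : F.min' hFne ≤ c.1 - x := by
          apply Finset.min'_le
          rw [hF, Finset.mem_insert]
          right
          exact Finset.mem_image.2 ⟨c, Finset.mem_filter.2 ⟨hc, hcx⟩, rfl⟩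
        have := hFpos _ (F.min'_mem hFne)
        rw [hε]; linarith
      -- find c' containing x + ε
      have hmem : x + ε ∈ Set.Icc lo hi := ⟨by linarith [hxP.1], hεhi⟩
      rw [← hcover] at hmem
      simp only [Set.mem_iUnion, exists_prop] at hmem
      obtain ⟨c', hc', hxc'⟩ := hmem
      have hmpos : (0:ℝ) < (2:ℝ) ^ (-(c'.2:ℤ)) := by positivity
      have hc'le : c'.1 ≤ x := by
        by_contra h
        push_neg at h
        exact absurd hxc'.1 (not_le.2 (hεlt c' hc' h))
      have hr' : x < c'.1 + (2:ℝ) ^ (-(c'.2:ℤ)) := by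
        have := hxc'.2
        linarith
      have hc'ne : c' ≠ I := by
        intro h
        rw [h] at hr'
        exact absurd hr' (lt_irrefl x)
      -- disjointness forces c'.1 = x
      have hvol := hdisj I hI c' hc' (fun h => hc'ne h.symm)
      rw [Set.Icc_inter_Icc, Real.volume_Icc, ENNReal.ofReal_eq_zero] at hvol
      have hminx : min x (c'.1 + (2:ℝ) ^ (-(c'.2:ℤ))) = x := min_eq_left hr'.le
      rw [hminx] at hvol
      have hc'1 : c'.1 = x := by
        rcases max_cases I.1 c'.1 with ⟨hm, _⟩ | ⟨hm, _⟩
        · rw [hm] at hvol; linarith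
        · rw [hm] at hvol; linarith
      -- grading
      have hxmemc' : x ∈ Set.Icc c'.1 (c'.1 + (2:ℝ) ^ (-(c'.2:ℤ))) := ⟨hc'1.le, hr'.le⟩
      have hm1 : (c'.2:ℤ) ≤ (I.2:ℤ) + 1 := by
        have := hgrade c' hc' I hI ⟨x, hxmemc', hxI⟩
        omega
      have hmL : c'.2 < L := by omega
      -- μbar is at or beyond the right end of c'
      have hμr' : c'.1 + (2:ℝ) ^ (-(c'.2:ℤ)) ≤ μbar := by
        by_cases hμc' : μbar ∈ Set.Icc c'.1 (c'.1 + (2:ℝ) ^ (-(c'.2:ℤ)))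
        · have hJc' : J ≠ c' := by
            intro h
            rw [h] at hJL
            omega
          have hv2 := hdisj J hJ c' hc' hJc'
          rw [Set.Icc_inter_Icc, Real.volume_Icc, ENNReal.ofReal_eq_zero] at hv2
          have hmax : max J.1 c'.1 ≤ μbar := max_le hμJ.1 hμc'.1
          have hmin : μbar ≤ min (J.1 + (2:ℝ) ^ (-(J.2:ℤ))) (c'.1 + (2:ℝ) ^ (-(c'.2:ℤ))) :=
            le_min hμJ.2 hμc'.2
          have heq1 : max J.1 c'.1 = μbar := by linarith
          have hJ1 : J.1 = μbar := by
            rcases max_cases J.1 c'.1 with ⟨hm, _⟩ | ⟨hm, hmle⟩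
            · rw [hm] at heq1; exact heq1
            · rw [hm, hc'1] at heq1
              exact absurd heq1 (ne_of_lt hxμ)
          have heq2 : min (J.1 + (2:ℝ) ^ (-(J.2:ℤ))) (c'.1 + (2:ℝ) ^ (-(c'.2:ℤ))) = μbar := by
            linarith
          rcases min_cases (J.1 + (2:ℝ) ^ (-(J.2:ℤ))) (c'.1 + (2:ℝ) ^ (-(c'.2:ℤ))) with
            ⟨hm, _⟩ | ⟨hm, _⟩
          · rw [hm, hJ1] at heq2; linarith
          · rw [hm] at heq2; linarith
        · rw [Set.mem_Icc] at hμc'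
          push_neg at hμc'
          have := hμc' (by rw [hc'1]; linarith)
          linarith
      -- distance formulas
      have hdI : Metric.infDist μbar (Set.Icc I.1 x) = μbar - x :=
        infDist_Icc_right (by rw [hxdef]; linarith) hxμ.le
      have hdc' : Metric.infDist μbar (Set.Icc c'.1 (c'.1 + (2:ℝ) ^ (-(c'.2:ℤ)))) =
          μbar - (c'.1 + (2:ℝ) ^ (-(c'.2:ℤ))) :=
        infDist_Icc_right (by linarith) hμr'
      rw [hdI] at hdist ⊢
      -- apply IH
      have hLm : (2:ℝ) ^ (-(L:ℤ)) ≤ (2:ℝ) ^ (-(c'.2:ℤ)) := by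
        apply zpow_le_zpow_right₀ one_le_two
        have := hLmax c' hc'
        omega
      have hIH : (2:ℝ) ^ (-(c'.2:ℤ)) - (2:ℝ) ^ (1-(L:ℤ)) ≤
          Metric.infDist μbar (Set.Icc c'.1 (c'.1 + (2:ℝ) ^ (-(c'.2:ℤ)))) := by
        apply IH c' hc' hmL
        rw [hdc']
        push_cast at hdist
        rw [hc'1]
        linarith
      rw [hdc'] at hIH
      have hdouble : (2:ℝ) ^ (-(I.2:ℤ)) ≤ 2 * (2:ℝ) ^ (-(c'.2:ℤ)) := by
        have h1 : (2:ℝ) ^ (-(I.2:ℤ)) = 2 * (2:ℝ) ^ (-(I.2:ℤ) - 1) := by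
          rw [mul_comm, ← zpow_add_one₀ (two_ne_zero (α := ℝ))]
          norm_num
        have h2 : (2:ℝ) ^ (-(I.2:ℤ) - 1) ≤ (2:ℝ) ^ (-(c'.2:ℤ)) := by
          apply zpow_le_zpow_right₀ one_le_two
          omega
        linarith
      rw [hc'1] at hIH
      linarith



/-- For a graded dyadic partition of a closed bounded interval `P ⊂ ℝ`
(cells encoded as pairs `(a, ℓ)` representing `Icc a (a + 2^{-ℓ})` of level `ℓ`),
with maximal level `L`, `μ̄` contained in a cell of level `L`, every cell `I` of level
`ℓ < L` satisfies `dist(I, μ̄) ≥ 2^{-ℓ}·(1 − 2^{-(L-ℓ)+1})`. -/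
theorem stmt0 (lo hi : ℝ) (hlohi : lo < hi) (μbar : ℝ) (hμbarP : μbar ∈ Set.Icc lo hi)
    (cells : Finset (ℝ × ℕ)) (L : ℕ)
    (hcover : (⋃ c ∈ cells, Set.Icc c.1 (c.1 + (2:ℝ) ^ (-(c.2 : ℤ)))) = Set.Icc lo hi)
    (hdisj : ∀ c ∈ cells, ∀ c' ∈ cells, c ≠ c' →
      MeasureTheory.volume (Set.Icc c.1 (c.1 + (2:ℝ) ^ (-(c.2 : ℤ))) ∩
        Set.Icc c'.1 (c'.1 + (2:ℝ) ^ (-(c'.2 : ℤ)))) = 0)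
    (hgrade : ∀ c ∈ cells, ∀ c' ∈ cells,
      (Set.Icc c.1 (c.1 + (2:ℝ) ^ (-(c.2 : ℤ))) ∩
        Set.Icc c'.1 (c'.1 + (2:ℝ) ^ (-(c'.2 : ℤ)))).Nonempty →
      (c.2 : ℤ) - (c'.2 : ℤ) ≤ 1)
    (hLmax : ∀ c ∈ cells, c.2 ≤ L)
    (hμbarcell : ∃ c ∈ cells, c.2 = L ∧ μbar ∈ Set.Icc c.1 (c.1 + (2:ℝ) ^ (-(c.2 : ℤ))))
    (I : ℝ × ℕ) (hI : I ∈ cells) (hIlev : I.2 < L) :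
    Metric.infDist μbar (Set.Icc I.1 (I.1 + (2:ℝ) ^ (-(I.2 : ℤ)))) ≥
      (2:ℝ) ^ (-(I.2 : ℤ)) * (1 - (2:ℝ) ^ (-((L : ℤ) - (I.2 : ℤ)) + 1)) := by
  have hrhs : (2:ℝ) ^ (-(I.2 : ℤ)) * (1 - (2:ℝ) ^ (-((L : ℤ) - (I.2 : ℤ)) + 1)) =
      (2:ℝ) ^ (-(I.2:ℤ)) - (2:ℝ) ^ (1-(L:ℤ)) := by
    rw [mul_sub, mul_one, ← zpow_add₀ (two_ne_zero (α := ℝ))]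
    ring_nf
  rw [hrhs, ge_iff_le]
  set n := ⌈(hi - lo) * 2 ^ L⌉₊ with hn
  apply aux0 lo hi μbar hμbarP cells L hcover hdisj hgrade hLmax hμbarcell n I hI hIlev
  have hpos : (0:ℝ) < (2:ℝ) ^ (-(I.2:ℤ)) := by positivity
  have hIP : I.1 ∈ Set.Icc lo hi := by
    rw [← hcover]
    apply Set.subset_biUnion_of_mem (u := fun c => Set.Icc c.1 (c.1 + (2:ℝ) ^ (-(c.2 : ℤ)))) hI
    exact Set.left_mem_Icc.2 (by linarith)
  have h1 : Metric.infDist μbar (Set.Icc I.1 (I.1 + (2:ℝ) ^ (-(I.2 : ℤ)))) ≤ hi - lo := by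
    have h2 := Metric.infDist_le_dist_of_mem (x := μbar) (y := I.1)
      (s := Set.Icc I.1 (I.1 + (2:ℝ) ^ (-(I.2:ℤ))))
      (Set.left_mem_Icc.2 (le_add_of_nonneg_right hpos.le))
    rw [Real.dist_eq] at h2
    rcases abs_cases (μbar - I.1) with ⟨he, _⟩ | ⟨he, _⟩ <;>
      rw [he] at h2 <;> [linarith [hμbarP.2, hIP.1]; linarith [hμbarP.1, hIP.2]]
  have h2L : (0:ℝ) < 2 ^ L := by positivity
  have hle : hi - lo ≤ n * (2:ℝ) ^ (-(L:ℤ)) := by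
    have hceil := Nat.le_ceil ((hi - lo) * 2 ^ L)
    rw [zpow_neg, zpow_natCast, ← div_eq_mul_inv, le_div_iff₀ h2L]
    exact hceil
  linarith
end

section
/- Let C ≥ 1, 0 ≤ β ≤ 1, b > β, 0 ≤ α < 1, and let ℓ₀, ℓ, L be natural numbers with ℓ₀ ≤ ℓ ≤ L − 2 and α·(ℓ₀ + 1) ≥ log₂ C. Let p = ⌈bL/(ℓ+1)⌉. Then 2^{1 + (ℓ+1)β − (ℓ+1)p} · C^{p+1} ≤ max{C²·2^{1+(ℓ₀+1)β}, 2^{1−β}·C^{2(1+b)}} · max{2^{−(1−α)bL}, 2^{−(b−β)L}}. -/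
/-!
Write `C = 2 ^ c` with `c = log₂ C`, so that the claim becomes an inequality between exponents
of `2`. Since `c ≤ α (ℓ₀ + 1) ≤ ℓ + 1`, the exponent is decreasing in the degree `p`, so
`p ≥ bL/(ℓ+1)` bounds it by `1 + c - bL + g(ℓ + 1)` with `g n = β n + bLc / n`. The function `g`
is convex on `(0, ∞)`, hence on `[ℓ₀ + 1, L - 1]` it is bounded by its values at the endpoints;
at `ℓ₀ + 1` the constraint on `α` gives `bLc/(ℓ₀+1) ≤ αbL`, and at `L - 1` we use `L/(L-1) ≤ 2`.
-/

open Set Real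

lemma convexOn_mul_add_div (β : ℝ) {K : ℝ} (hK : 0 ≤ K) :
    ConvexOn ℝ (Ioi 0) fun x : ℝ ↦ β * x + K / x := by
  refine (((LinearMap.mulLeft ℝ β).convexOn (convex_Ioi 0)).add
    ((convexOn_zpow (-1)).smul hK)).congr fun x _ ↦ ?_
  simp [div_eq_mul_inv]

section Exponent

variable {β b α c n₀ n L P : ℝ}

lemma exponent_le_of_div_le (hcn : c ≤ n) (hn : 0 < n) (hP : b * L / n ≤ P) :
    1 + n * β - n * P + c * (P + 1) ≤ 1 + c - b * L + (β * n + b * L * c / n) := by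
  have hq : n * (b * L / n) = b * L := mul_div_cancel₀ _ hn.ne'
  have : b * L * c / n = b * L / n * c := by ring
  nlinarith [mul_le_mul_of_nonneg_left hP (sub_nonneg.2 hcn)]

lemma exponent_le_at_left_endpoint (hn₀ : 0 < n₀) (hc : 0 ≤ c) (hcα : c ≤ α * n₀)
    (hbL : 0 ≤ b * L) :
    1 + c - b * L + (β * n₀ + b * L * c / n₀) ≤ c * 2 + (1 + n₀ * β) + -(1 - α) * b * L := by
  have : b * L * c / n₀ ≤ α * (b * L) := by
    rw [div_le_iff₀ hn₀]
    nlinarith [mul_le_mul_of_nonneg_left hcα hbL]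
  nlinarith

lemma exponent_le_at_right_endpoint (hL : 2 ≤ L) (hc : 0 ≤ c) (hb : 0 ≤ b) :
    1 + c - b * L + (β * (L - 1) + b * L * c / (L - 1)) ≤
      1 - β + c * (2 * (1 + b)) + -(b - β) * L := by
  have : b * L * c / (L - 1) ≤ 2 * (b * c) := by
    rw [div_le_iff₀ (by linarith)]
    nlinarith [mul_nonneg hb hc]
  nlinarith

lemma exponent_le (hc : 0 ≤ c) (hcα : c ≤ α * n₀) (hα : α ≤ 1) (hb : 0 ≤ b) (hn₀ : 1 ≤ n₀)
    (hn₀n : n₀ ≤ n) (hnL : n ≤ L - 1) (hP : b * L / n ≤ P) :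
    1 + n * β - n * P + c * (P + 1) ≤
      max (c * 2 + (1 + n₀ * β)) (1 - β + c * (2 * (1 + b))) +
        max (-(1 - α) * b * L) (-(b - β) * L) := by
  have hcn : c ≤ n := by nlinarith
  have hbL : 0 ≤ b * L := mul_nonneg hb (by linarith)
  calc 1 + n * β - n * P + c * (P + 1)
      ≤ 1 + c - b * L + (β * n + b * L * c / n) := exponent_le_of_div_le hcn (by linarith) hP
    _ ≤ 1 + c - b * L + max (β * n₀ + b * L * c / n₀) (β * (L - 1) + b * L * c / (L - 1)) := by
        gcongr
        exact (convexOn_mul_add_div β (mul_nonneg hbL hc)).le_max_of_mem_Icc (x := n₀)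
          (y := L - 1) (mem_Ioi.2 (by linarith)) (mem_Ioi.2 (by linarith)) ⟨hn₀n, hnL⟩
    _ = max (1 + c - b * L + (β * n₀ + b * L * c / n₀))
          (1 + c - b * L + (β * (L - 1) + b * L * c / (L - 1))) := add_max _ _ _
    _ ≤ max (c * 2 + (1 + n₀ * β) + -(1 - α) * b * L)
          (1 - β + c * (2 * (1 + b)) + -(b - β) * L) :=
        max_le_max (exponent_le_at_left_endpoint (by linarith) hc hcα hbL)
          (exponent_le_at_right_endpoint (by linarith) hc hb)
    _ ≤ _ := max_add_add_le_max_add_max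

end Exponent

lemma two_rpow_max (x y : ℝ) : (2 : ℝ) ^ max x y = max (2 ^ x) (2 ^ y) :=
  (monotone_rpow_of_base_ge_one one_le_two).map_max

theorem stmt3_general (C β b α : ℝ) (ℓ₀ ℓ L : ℕ)
    (hC : 1 ≤ C) (hβ0 : 0 ≤ β) (hbβ : β < b)
    (hα1 : α < 1)
    (hℓ₀ℓ : ℓ₀ ≤ ℓ) (hℓL : (ℓ : ℤ) ≤ (L : ℤ) - 2)
    (hlog : Real.logb 2 C ≤ α * ((ℓ₀ : ℝ) + 1)) :
    (2:ℝ) ^ (1 + ((ℓ : ℝ) + 1) * β -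
        ((ℓ : ℝ) + 1) * ((⌈b * (L : ℝ) / ((ℓ : ℝ) + 1)⌉ : ℤ) : ℝ)) *
      C ^ ((⌈b * (L : ℝ) / ((ℓ : ℝ) + 1)⌉ : ℤ) + 1) ≤
    max (C ^ 2 * (2:ℝ) ^ (1 + ((ℓ₀ : ℝ) + 1) * β)) ((2:ℝ) ^ (1 - β) * C ^ (2 * (1 + b))) *
      max ((2:ℝ) ^ (-(1 - α) * b * (L : ℝ))) ((2:ℝ) ^ (-(b - β) * (L : ℝ))) := by
  set P : ℤ := ⌈b * (L : ℝ) / ((ℓ : ℝ) + 1)⌉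
  set c := logb 2 C
  have hpow (x : ℝ) : C ^ x = 2 ^ (c * x) := by
    rw [rpow_mul zero_le_two, rpow_logb two_pos (by norm_num) (by linarith)]
  rw [← rpow_intCast, ← rpow_natCast, hpow, hpow, hpow, ← rpow_add two_pos, ← rpow_add two_pos,
    ← rpow_add two_pos, ← two_rpow_max, ← two_rpow_max, ← rpow_add two_pos]
  refine rpow_le_rpow_of_exponent_le one_le_two ?_
  have hℓ₀ℓ' : (ℓ₀ : ℝ) ≤ ℓ := by exact_mod_cast hℓ₀ℓ
  have hℓL' : (ℓ : ℝ) ≤ L - 2 := by exact_mod_cast hℓL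
  exact_mod_cast exponent_le (β := β) (b := b) (c := c) (n := ℓ + 1) (L := L) (P := P)
    (logb_nonneg one_lt_two hC) hlog hα1.le (by linarith) (by linarith) (by linarith)
    (by linarith) (Int.le_ceil _)

/-- the core numerical estimate of the hp-adaptive error bound, with
degree choice `p = ⌈bL/(ℓ+1)⌉` on a cell of level `ℓ₀ ≤ ℓ ≤ L−2` and the constraint
`α(ℓ₀+1) ≥ log₂ C`. -/
theorem stmt3 (C β b α : ℝ) (ℓ₀ ℓ L : ℕ)
    (hC : 1 ≤ C) (hβ0 : 0 ≤ β) (hβ1 : β ≤ 1) (hbβ : β < b)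
    (hα0 : 0 ≤ α) (hα1 : α < 1)
    (hℓ₀ℓ : ℓ₀ ≤ ℓ) (hℓL : (ℓ : ℤ) ≤ (L : ℤ) - 2)
    (hlog : Real.logb 2 C ≤ α * ((ℓ₀ : ℝ) + 1)) :
    (2:ℝ) ^ (1 + ((ℓ : ℝ) + 1) * β -
        ((ℓ : ℝ) + 1) * ((⌈b * (L : ℝ) / ((ℓ : ℝ) + 1)⌉ : ℤ) : ℝ)) *
      C ^ ((⌈b * (L : ℝ) / ((ℓ : ℝ) + 1)⌉ : ℤ) + 1) ≤
    max (C ^ 2 * (2:ℝ) ^ (1 + ((ℓ₀ : ℝ) + 1) * β)) ((2:ℝ) ^ (1 - β) * C ^ (2 * (1 + b))) *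
      max ((2:ℝ) ^ (-(1 - α) * b * (L : ℝ))) ((2:ℝ) ^ (-(b - β) * (L : ℝ))) :=
  stmt3_general C β b α ℓ₀ ℓ L hC hβ0 hbβ hα1 hℓ₀ℓ hℓL hlog
end

section
/- Let P ⊂ ℝ be an interval, Ω ⊂ ℝ^m, and let φ : P × P → (Ω → Ω) be a family of maps satisfying φ(μ, μ)(x) = x for all μ ∈ P, x ∈ Ω, and the decomposition property φ(μ, η) = φ(ξ, η) ∘ φ(μ, ξ) for all μ, ξ, η ∈ P. Assume that for every ξ ∈ P and y ∈ Ω the map η ↦ φ(ξ, η)(y) is differentiable at η = ξ, and define Φ(ξ, y) := (∂/∂η) φ(ξ, η)(y)|_{η=ξ}. Then for all μ, η ∈ P and x ∈ Ω, the map η ↦ φ(μ, η)(x) is differentiable at η with (d/dη) φ(μ, η)(x) = Φ(η, φ(μ, η)(x)); that is, η ↦ φ(μ, η)(x) solves the ODE y'(η) = Φ(η, y(η)) with initial condition y(μ) = x. -/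
/-- a family of transforms `φ(μ, η) : Ω → Ω` over an interval `P ⊂ ℝ`
satisfying `φ(μ, μ) = id` and the decomposition property `φ(μ, η) = φ(ξ, η) ∘ φ(μ, ξ)`
solves, for fixed `μ ∈ P` and `x ∈ Ω`, the ODE `y'(η) = Φ(η, y(η))`, `y(μ) = x`,
where `Φ(ξ, y) = ∂_η φ(ξ, η)(y)|_{η = ξ}`. -/
theorem stmt5 {m : ℕ} (P : Set ℝ) (hP : P.OrdConnected)
    (Ω : Set (EuclideanSpace ℝ (Fin m)))
    (φ : ℝ → ℝ → EuclideanSpace ℝ (Fin m) → EuclideanSpace ℝ (Fin m))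
    (Φ : ℝ → EuclideanSpace ℝ (Fin m) → EuclideanSpace ℝ (Fin m))
    (hmaps : ∀ μ ∈ P, ∀ η ∈ P, ∀ x ∈ Ω, φ μ η x ∈ Ω)
    (hid : ∀ μ ∈ P, ∀ x ∈ Ω, φ μ μ x = x)
    (hdecomp : ∀ μ ∈ P, ∀ ξ ∈ P, ∀ η ∈ P, ∀ x ∈ Ω, φ μ η x = φ ξ η (φ μ ξ x))
    (hΦ : ∀ ξ ∈ P, ∀ y ∈ Ω, HasDerivWithinAt (fun η => φ ξ η y) (Φ ξ y) P ξ) :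
    ∀ μ ∈ P, ∀ η ∈ P, ∀ x ∈ Ω,
      HasDerivWithinAt (fun η' => φ μ η' x) (Φ η (φ μ η x)) P η ∧ φ μ μ x = x := by
  intro μ hμ η hη x hx
  have hy := hmaps μ hμ η hη x hx
  refine ⟨(hΦ η hη _ hy).congr (fun η' hη' => hdecomp μ hμ η hη η' hη' x hx) ?_, hid μ hμ x hx⟩
  exact (hid η hη _ hy).symm
end

section
/- Let Ω ⊂ ℝ^m be a measurable set with Lebesgue measure λ, let P and 𝒫̂ be parameter sets, let γ ≥ 0, C ≥ 0, c > 0, ρ > 1, d ≥ 2, and n ≥ 1. Fix μ ∈ P and μ̂ ∈ 𝒫̂, let N ⊂ 𝒫̂ be a finite set of interpolation points, and for each η̂ ∈ N let ℓ_{η̂}(μ̂) ∈ ℝ be the Lagrange weight, φ₁^{η̂} : Ω → Ω a measurable transform with (φ₁^{η̂})_* λ (A) ≤ γ·λ(A) for all measurable A, and φ₂^{η̂} ∈ P. Define, for w : Ω × P × 𝒫̂ → ℝ, the operator (T₂ w)(x, μ, μ̂) := Σ_{η̂ ∈ N} ℓ_{η̂}(μ̂) · w(φ₁^{η̂}(x),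 φ₂^{η̂}, η̂), and let Λ_n := Σ_{η̂ ∈ N} |ℓ_{η̂}(μ̂)|. Assume u, v : Ω × P × 𝒫̂ → ℝ satisfy: (i) ‖u(·, μ, μ̂) − (T₂ u)(·, μ, μ̂)‖_{L¹(Ω)} ≤ C·ρ^{−n^{1/(d−1)}}; and (ii) ‖u(·, μ', η̂) − v(·, μ', η̂)‖_{L¹(Ω)} ≤ C·ρ^{−c·n^{1/2}} for all μ' ∈ P and η̂ ∈ N. Then ‖u(·, μ, μ̂) − (T₂ v)(·, μ, μ̂)‖_{L¹(Ω)} ≤ C·γ·Λ_n·ρ^{−c·n^{1/2}} + C·ρ^{−n^{1/(d−1)}}. -/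
/-!
Split `u - T₂ v = (u - T₂ u) + T₂ (u - v)`. The first part is bounded by (i). In the second,
each term `(u - v) ∘ φ₁^η̂` has `L¹(Ω)` norm at most `γ` times that of `u - v`, because the
push-forward of `λ|_Ω` under `φ₁^η̂` is dominated by `γ • λ|_Ω`; weighting these by `|ℓ_η̂(μ̂)|`
gives `γ Λ_n` times the bound (ii).
-/

open MeasureTheory

namespace MeasureTheory

variable {α E : Type*} [MeasurableSpace α] [NormedAddCommGroup E]

lemma Measure.map_restrict_le_smul_restrict {μ : Measure α} {s : Set α} (hs : MeasurableSet s)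
    {φ : α → α} (hφ : Measurable φ) (hmaps : Set.MapsTo φ s s) {c : ENNReal}
    (hpush : ∀ A ⊆ s, MeasurableSet A → μ (s ∩ φ ⁻¹' A) ≤ c * μ A) :
    (μ.restrict s).map φ ≤ c • μ.restrict s := by
  refine Measure.le_iff.mpr fun A hA => ?_
  have hpre : φ ⁻¹' A ∩ s = s ∩ φ ⁻¹' (A ∩ s) := by
    ext x
    exact ⟨fun ⟨hxA, hxs⟩ => ⟨hxs, hxA, hmaps hxs⟩, fun ⟨hxs, hxA, _⟩ => ⟨hxA, hxs⟩⟩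
  rw [Measure.map_apply hφ hA, Measure.restrict_apply (hφ hA), hpre, Measure.smul_apply,
    Measure.restrict_apply hA, smul_eq_mul]
  exact hpush _ Set.inter_subset_right (hA.inter hs)

variable {ν : Measure α} {φ : α → α} {c : ENNReal}

lemma Integrable.comp_of_map_le_smul (hφ : AEMeasurable φ ν) (hle : ν.map φ ≤ c • ν)
    (hc : c ≠ ⊤) {f : α → E} (hf : Integrable f ν) : Integrable (fun x => f (φ x)) ν := by
  have hf_map : Integrable f (ν.map φ) := hf.of_measure_le_smul hc hle
  exact (integrable_map_measure hf_map.aestronglyMeasurable hφ).mp hf_map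

lemma integral_norm_comp_le_of_map_le_smul (hφ : AEMeasurable φ ν) (hle : ν.map φ ≤ c • ν)
    (hc : c ≠ ⊤) {f : α → E} (hf : Integrable f ν) :
    ∫ x, ‖f (φ x)‖ ∂ν ≤ c.toReal * ∫ x, ‖f x‖ ∂ν :=
  calc ∫ x, ‖f (φ x)‖ ∂ν = ∫ y, ‖f y‖ ∂(ν.map φ) :=
        (integral_map hφ (hf.of_measure_le_smul hc hle).norm.aestronglyMeasurable).symm
    _ ≤ ∫ y, ‖f y‖ ∂(c • ν) :=
        integral_mono_measure hle (Filter.Eventually.of_forall fun _ => norm_nonneg _)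
          (hf.smul_measure hc).norm
    _ = c.toReal * ∫ x, ‖f x‖ ∂ν := integral_smul_measure _ _

lemma integral_norm_sub_sum_smul_le [NormedSpace ℝ E] {ι : Type*} (s : Finset ι) (a : ι → ℝ)
    {f : α → E} {g h : ι → α → E} (hf : Integrable f ν) (hg : ∀ i ∈ s, Integrable (g i) ν)
    (hh : ∀ i ∈ s, Integrable (h i) ν) :
    ∫ x, ‖f x - ∑ i ∈ s, a i • h i x‖ ∂ν ≤
      ∫ x, ‖f x - ∑ i ∈ s, a i • g i x‖ ∂ν + ∑ i ∈ s, |a i| * ∫ x, ‖g i x - h i x‖ ∂ν := by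
  have hgh : ∀ i ∈ s, Integrable (fun x => |a i| * ‖g i x - h i x‖) ν :=
    fun i hi => ((hg i hi).sub (hh i hi)).norm.const_mul _
  have hfg : Integrable (fun x => ‖f x - ∑ i ∈ s, a i • g i x‖) ν :=
    (hf.sub (integrable_finsetSum s fun i hi => (hg i hi).smul (a i))).norm
  have hfh : Integrable (fun x => ‖f x - ∑ i ∈ s, a i • h i x‖) ν :=
    (hf.sub (integrable_finsetSum s fun i hi => (hh i hi).smul (a i))).norm
  have hpointwise : ∀ x, ‖f x - ∑ i ∈ s, a i • h i x‖ ≤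
      ‖f x - ∑ i ∈ s, a i • g i x‖ + ∑ i ∈ s, |a i| * ‖g i x - h i x‖ := fun x =>
    calc ‖f x - ∑ i ∈ s, a i • h i x‖
        = ‖(f x - ∑ i ∈ s, a i • g i x) + ∑ i ∈ s, a i • (g i x - h i x)‖ := by
          simp only [smul_sub, Finset.sum_sub_distrib, sub_add_sub_cancel]
      _ ≤ ‖f x - ∑ i ∈ s, a i • g i x‖ + ∑ i ∈ s, ‖a i • (g i x - h i x)‖ :=
          (norm_add_le _ _).trans (add_le_add_right (norm_sum_le _ _) _)
      _ = ‖f x - ∑ i ∈ s, a i • g i x‖ + ∑ i ∈ s, |a i| * ‖g i x - h i x‖ := by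
          simp only [norm_smul, Real.norm_eq_abs]
  calc ∫ x, ‖f x - ∑ i ∈ s, a i • h i x‖ ∂ν
      ≤ ∫ x, (‖f x - ∑ i ∈ s, a i • g i x‖ + ∑ i ∈ s, |a i| * ‖g i x - h i x‖) ∂ν :=
        integral_mono hfh (hfg.add (integrable_finsetSum s hgh)) hpointwise
    _ = ∫ x, ‖f x - ∑ i ∈ s, a i • g i x‖ ∂ν + ∑ i ∈ s, |a i| * ∫ x, ‖g i x - h i x‖ ∂ν := by
        rw [integral_add hfg (integrable_finsetSum s hgh), integral_finsetSum s hgh]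
        simp only [integral_const_mul]

end MeasureTheory

theorem stmt11_general {m : ℕ} {P Phat : Type*} (Ω : Set (EuclideanSpace ℝ (Fin m)))
    (hΩ : MeasurableSet Ω)
    (γ C c ρ : ℝ) (d n : ℕ)
    (hγ : 0 ≤ γ)
    (μ : P) (μhat : Phat) (N : Finset Phat)
    (ℓw : Phat → ℝ)
    (φ₁ : Phat → EuclideanSpace ℝ (Fin m) → EuclideanSpace ℝ (Fin m))
    (φ₂ : Phat → P)
    (hmeas : ∀ i ∈ N, Measurable (φ₁ i))
    (hmapsto : ∀ i ∈ N, Set.MapsTo (φ₁ i) Ω Ω)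
    (hpush : ∀ i ∈ N, ∀ A : Set (EuclideanSpace ℝ (Fin m)), A ⊆ Ω → MeasurableSet A →
      volume (Ω ∩ φ₁ i ⁻¹' A) ≤ ENNReal.ofReal γ * volume A)
    (u v : EuclideanSpace ℝ (Fin m) → P → Phat → ℝ)
    (hu : ∀ (μ' : P) (i : Phat), IntegrableOn (fun x => u x μ' i) Ω)
    (hv : ∀ (μ' : P) (i : Phat), IntegrableOn (fun x => v x μ' i) Ω)
    (hi : ∫ x in Ω, |u x μ μhat - ∑ i ∈ N, ℓw i * u (φ₁ i x) (φ₂ i) i| ≤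
      C * ρ ^ (-((n : ℝ) ^ ((1:ℝ) / ((d : ℝ) - 1)))))
    (hii : ∀ (μ' : P), ∀ i ∈ N,
      ∫ x in Ω, |u x μ' i - v x μ' i| ≤ C * ρ ^ (-(c * Real.sqrt (n : ℝ)))) :
    ∫ x in Ω, |u x μ μhat - ∑ i ∈ N, ℓw i * v (φ₁ i x) (φ₂ i) i| ≤
      C * γ * (∑ i ∈ N, |ℓw i|) * ρ ^ (-(c * Real.sqrt (n : ℝ))) +
        C * ρ ^ (-((n : ℝ) ^ ((1:ℝ) / ((d : ℝ) - 1)))) := by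
  have hle : ∀ i ∈ N, (volume.restrict Ω).map (φ₁ i) ≤ ENNReal.ofReal γ • volume.restrict Ω :=
    fun i hi => Measure.map_restrict_le_smul_restrict hΩ (hmeas i hi) (hmapsto i hi) (hpush i hi)
  have hcomp : ∀ w : EuclideanSpace ℝ (Fin m) → P → Phat → ℝ, (∀ μ' i, IntegrableOn
      (fun x => w x μ' i) Ω) → ∀ i ∈ N, IntegrableOn (fun x => w (φ₁ i x) (φ₂ i) i) Ω :=
    fun w hw i hi => Integrable.comp_of_map_le_smul (hmeas i hi).aemeasurable (hle i hi)
      ENNReal.ofReal_ne_top (hw (φ₂ i) i)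
  have hstab := integral_norm_sub_sum_smul_le N ℓw (hu μ μhat) (hcomp u hu) (hcomp v hv)
  simp only [smul_eq_mul, Real.norm_eq_abs] at hstab
  have hdata : ∀ i ∈ N, ∫ x in Ω, |u (φ₁ i x) (φ₂ i) i - v (φ₁ i x) (φ₂ i) i| ≤
      γ * (C * ρ ^ (-(c * Real.sqrt (n : ℝ)))) := fun i hi => by
    have := integral_norm_comp_le_of_map_le_smul (hmeas i hi).aemeasurable (hle i hi)
      ENNReal.ofReal_ne_top ((hu (φ₂ i) i).sub (hv (φ₂ i) i))
    simp only [Pi.sub_apply, Real.norm_eq_abs, ENNReal.toReal_ofReal hγ] at this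
    exact this.trans (mul_le_mul_of_nonneg_left (hii (φ₂ i) i hi) hγ)
  calc _ ≤ _ := hstab
    _ ≤ C * ρ ^ (-((n : ℝ) ^ ((1:ℝ) / ((d : ℝ) - 1)))) +
        ∑ i ∈ N, |ℓw i| * (γ * (C * ρ ^ (-(c * Real.sqrt (n : ℝ))))) := by
      gcongr with i hi
      exact hdata i hi
    _ = _ := by rw [← Finset.sum_mul]; ring

/-- combination of the stability of the second-component transformed
snapshot interpolation `T₂` with the error bounds of both component TSIs:
`‖u − T₂ v‖_{L¹(Ω)} ≤ C·γ·Λ_n·ρ^{−c·√n} + C·ρ^{−n^{1/(d−1)}}`, where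
`Λ_n = Σ_{η̂ ∈ N} |ℓ_{η̂}(μ̂)|` is the Lebesgue constant. -/
theorem stmt11 {m : ℕ} {P Phat : Type*} (Ω : Set (EuclideanSpace ℝ (Fin m)))
    (hΩ : MeasurableSet Ω)
    (γ C c ρ : ℝ) (d n : ℕ)
    (hγ : 0 ≤ γ) (hC : 0 ≤ C) (hc : 0 < c) (hρ : 1 < ρ) (hd : 2 ≤ d) (hn : 1 ≤ n)
    (μ : P) (μhat : Phat) (N : Finset Phat)
    (ℓw : Phat → ℝ)
    (φ₁ : Phat → EuclideanSpace ℝ (Fin m) → EuclideanSpace ℝ (Fin m))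
    (φ₂ : Phat → P)
    (hmeas : ∀ i ∈ N, Measurable (φ₁ i))
    (hmapsto : ∀ i ∈ N, Set.MapsTo (φ₁ i) Ω Ω)
    (hpush : ∀ i ∈ N, ∀ A : Set (EuclideanSpace ℝ (Fin m)), A ⊆ Ω → MeasurableSet A →
      volume (Ω ∩ φ₁ i ⁻¹' A) ≤ ENNReal.ofReal γ * volume A)
    (u v : EuclideanSpace ℝ (Fin m) → P → Phat → ℝ)
    (hu : ∀ (μ' : P) (i : Phat), IntegrableOn (fun x => u x μ' i) Ω)
    (hv : ∀ (μ' : P) (i : Phat), IntegrableOn (fun x => v x μ' i) Ω)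
    (hi : ∫ x in Ω, |u x μ μhat - ∑ i ∈ N, ℓw i * u (φ₁ i x) (φ₂ i) i| ≤
      C * ρ ^ (-((n : ℝ) ^ ((1:ℝ) / ((d : ℝ) - 1)))))
    (hii : ∀ (μ' : P), ∀ i ∈ N,
      ∫ x in Ω, |u x μ' i - v x μ' i| ≤ C * ρ ^ (-(c * Real.sqrt (n : ℝ)))) :
    ∫ x in Ω, |u x μ μhat - ∑ i ∈ N, ℓw i * v (φ₁ i x) (φ₂ i) i| ≤
      C * γ * (∑ i ∈ N, |ℓw i|) * ρ ^ (-(c * Real.sqrt (n : ℝ))) +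
        C * ρ ^ (-((n : ℝ) ^ ((1:ℝ) / ((d : ℝ) - 1)))) :=
  stmt11_general Ω hΩ γ C c ρ d n hγ μ μhat N ℓw φ₁ φ₂ hmeas hmapsto hpush u v hu hv hi hii
end

section
/- Let P ⊂ ℝ and 𝒫̂ ⊂ ℝ^{d−1}, let μ̄ : 𝒫̂ → P, and define the regions R₁ = {(μ, μ̂) : μ ≤ μ̄(μ̂)} and R₂ = {(μ, μ̂) : μ ≥ μ̄(μ̂)}. For each (μ, μ̂) ∈ P × 𝒫̂ let J_{μ, μ̂} ⊆ Ω be a set (the jump set), and suppose there is a family of transforms φ(μ, μ̂, η, η̂) : Ω → Ω such that whenever (μ, μ̂) and (η, η̂) lie in the same region R_i (i = 1 or 2), one has φ(μ, μ̂, η, η̂)(x) ∈ J_{η, η̂} if and only if x ∈ J_{μ, μ̂}. Fix μ̂, η̂ ∈ 𝒫̂ and let φ̂ : P → P be monotonically increasing with φ̂(μ̄(μ̂)) = μ̄(η̂). Define the composite transform Φ(x, μ) := (φ(μ, μ̂, φ̂(μ), η̂)(x), φ̂(μ)) and the sets J_{μ̂} := {(x, μ) : x ∈ J_{μ, μ̂}}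 and J_{η̂} := {(x, η) : x ∈ J_{η, η̂}}. Then Φ(x, μ) ∈ J_{η̂} if and only if (x, μ) ∈ J_{μ̂}. -/
/-- jump-alignment of the composite transform
`Φ(x, μ) = (φ(μ, μ̂, φ̂(μ), η̂)(x), φ̂(μ))` of the component-wise TSI.  The parameter
domain `P × 𝒫̂` splits along the graph of `μ̄` into two regions `R₁, R₂` on which the
jump sets `J_{μ,μ̂}` are aligned by the transforms `φ`; the monotone reparametrization
`φ̂` with `φ̂(μ̄(μ̂)) = μ̄(η̂)` guarantees that `Φ` aligns `J_{μ̂} = {(x,μ) : x ∈ J_{μ,μ̂}}`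
with `J_{η̂} = {(x,η) : x ∈ J_{η,η̂}}`. -/
theorem stmt12 {m d : ℕ}
    (Ω : Set (EuclideanSpace ℝ (Fin m)))
    (P : Set ℝ) (Phat : Set (EuclideanSpace ℝ (Fin (d - 1))))
    (μbar : EuclideanSpace ℝ (Fin (d - 1)) → ℝ)
    (hμbarmaps : ∀ yhat ∈ Phat, μbar yhat ∈ P)
    (J : ℝ → EuclideanSpace ℝ (Fin (d - 1)) → Set (EuclideanSpace ℝ (Fin m)))
    (hJ : ∀ μ μhat, J μ μhat ⊆ Ω)
    (φ : ℝ → EuclideanSpace ℝ (Fin (d - 1)) → ℝ → EuclideanSpace ℝ (Fin (d - 1)) →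
      EuclideanSpace ℝ (Fin m) → EuclideanSpace ℝ (Fin m))
    -- alignment of the jump sets within each of the two regions R₁, R₂
    (halign : ∀ μ ∈ P, ∀ μhat ∈ Phat, ∀ η ∈ P, ∀ ηhat ∈ Phat,
      ((μ ≤ μbar μhat ∧ η ≤ μbar ηhat) ∨ (μbar μhat ≤ μ ∧ μbar ηhat ≤ η)) →
      ∀ x ∈ Ω, (φ μ μhat η ηhat x ∈ J η ηhat ↔ x ∈ J μ μhat))
    (μhat ηhat : EuclideanSpace ℝ (Fin (d - 1))) (hμhat : μhat ∈ Phat) (hηhat : ηhat ∈ Phat)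
    (φhat : ℝ → ℝ) (hφhatmaps : Set.MapsTo φhat P P) (hmono : MonotoneOn φhat P)
    (hinterface : φhat (μbar μhat) = μbar ηhat) :
    ∀ μ ∈ P, ∀ x ∈ Ω,
      ((φ μ μhat (φhat μ) ηhat x, φhat μ) ∈
          {q : EuclideanSpace ℝ (Fin m) × ℝ | q.1 ∈ J q.2 ηhat} ↔
        (x, μ) ∈ {q : EuclideanSpace ℝ (Fin m) × ℝ | q.1 ∈ J q.2 μhat}) := by
  intro μ hμ x hx
  have hb := hμbarmaps μhat hμhat
  have hφμ := hφhatmaps hμ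
  rcases le_total μ (μbar μhat) with h | h
  · exact halign μ hμ μhat hμhat (φhat μ) hφμ ηhat hηhat
      (Or.inl ⟨h, hinterface ▸ hmono hμ hb h⟩) x hx
  · exact halign μ hμ μhat hμhat (φhat μ) hφμ ηhat hηhat
      (Or.inr ⟨h, hinterface ▸ hmono hb hμ h⟩) x hx
end
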